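/- (Bounded gradient deviation for NEAR-DGDᵗ) Suppose 0 < α < 1/L and y_{i,0} = s_0 for all i. Then for all k ≥ 1 and all i: ‖∇f_i(x_{i,k}) − ∇f_i(x̄_k)‖ ≤ βᵗ D L_i and ‖g_k − ḡ_k‖ ≤ βᵗ D L, where x̄_k = (1/n)Σ_i x_{i,k}, g_k = (1/n)Σ_i ∇f_i(x_{i,k}), ḡ_k = (1/n)Σ_i ∇f_i(x̄_k), and D = ‖y_0 − u*‖ + ((ν + 4)/ν)‖u*‖ with u* the concatenation of the minimizers u_i* of the f_i, ν = 2αγ, γ = min_i μ_i L_i/(μ_i + L_i). -/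

import Mathlib

/-!
Each agent's gradient step `z ↦ z - α ∇fᵢ(z)` contracts towards `uᵢ*` by the factor `1 - ν/2`;
this is the classical consequence of the interpolation inequality
`μL‖a - b‖² + ‖∇f(a) - ∇f(b)‖² ≤ (μ + L)⟪∇f(a) - ∇f(b), a - b⟫` for `μ`-strongly convex,
`L`-smooth functions. The mixing step `Zᵗ` is nonexpansive, so it moves `y_k - u*` by at most
`2‖u*‖`, and the recursion `‖y_{k+1} - u*‖ ≤ (1 - ν/2)(‖y_k - u*‖ + 2‖u*‖)` keeps
`‖y_k - u*‖ ≤ ‖y₀ - u*‖ + (4/ν)‖u*‖` for all `k`.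

Since `W` is doubly stochastic, `x_k - 1 ⊗ x̄_k = Zᵗ(y_k - 1 ⊗ ȳ_k)`. Every column of
`y_k - 1 ⊗ ȳ_k` is orthogonal to the all-ones vector, which spans the eigenspace of the simple
eigenvalue `1` of `W`, so `Zᵗ` shrinks it by `βᵗ`; its norm is at most
`‖y_k - u*‖ + ‖u*‖ ≤ D`. The gradient bounds follow by Lipschitz continuity and averaging.
-/
open Finset Filter

noncomputable section

/-- A block `ℝ^p` with the Euclidean norm. -/
abbrev Vec (p : ℕ) := EuclideanSpace ℝ (Fin p)

/-- The concatenated space `ℝ^{np}` (n blocks of size p) with the Euclidean norm. -/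
abbrev CVec (n p : ℕ) := PiLp 2 (fun _ : Fin n => Vec p)

/-- Action of the Kronecker product `W ⊗ I_p` on a concatenated vector of `ℝ^{np}`. -/
def kron {n p : ℕ} (W : Matrix (Fin n) (Fin n) ℝ) (x : CVec n p) : CVec n p :=
  WithLp.toLp 2 (fun i => ∑ j, W i j • x j)

/-- Concatenated gradient `∇f(x) = (∇f₁(x₁); …; ∇fₙ(xₙ))`. -/
def gradConcat {n p : ℕ} (f : Fin n → Vec p → ℝ) (x : CVec n p) : CVec n p :=
  WithLp.toLp 2 (fun i => gradient (f i) (x i))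

open scoped RealInnerProductSpace
open Matrix

section GradientInequalities

variable {E : Type*} [NormedAddCommGroup E] [InnerProductSpace ℝ E] [CompleteSpace E]
  {f : E → ℝ} {f' : E → E}

theorem HasGradientAt.hasDerivAt_comp_add_smul {x v g : E} {s : ℝ}
    (h : HasGradientAt f g (x + s • v)) :
    HasDerivAt (fun s : ℝ => f (x + s • v)) ⟪g, v⟫ s := by
  have hline : HasDerivAt (fun s : ℝ => x + s • v) v s := by
    simpa using ((hasDerivAt_id s).smul_const v).const_add x
  simpa [InnerProductSpace.toDual_apply_apply, Function.comp_def] using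
    h.hasFDerivAt.comp_hasDerivAt s hline

theorem IsLocalMin.hasGradientAt_eq_zero {x g : E} (hmin : IsLocalMin f x)
    (h : HasGradientAt f g x) : g = 0 :=
  (InnerProductSpace.toDual ℝ E).map_eq_zero_iff.1 (hmin.hasFDerivAt_eq_zero h.hasFDerivAt)

theorem HasGradientAt.sub_half_mul_norm_sq {x g : E} (h : HasGradientAt f g x) (m : ℝ) :
    HasGradientAt (fun z => f z - m / 2 * ‖z‖ ^ 2) (g - m • x) x := by
  rw [hasGradientAt_iff_hasFDerivAt] at h ⊢
  refine (h.sub ((hasStrictFDerivAt_norm_sq x).hasFDerivAt.const_mul (m / 2))).congr_fderiv ?_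
  ext v
  simp only [_root_.sub_apply, InnerProductSpace.toDual_apply_apply, _root_.smul_apply,
    coe_innerSL_apply, nsmul_eq_mul, Nat.cast_ofNat, smul_eq_mul, map_sub, map_smul,
    sub_right_inj]
  ring

theorem ConvexOn.apply_add_inner_le (hconv : ConvexOn ℝ Set.univ f) {x g : E}
    (h : HasGradientAt f g x) (y : E) : f x + ⟪g, y - x⟫ ≤ f y := by
  have hline : ConvexOn ℝ Set.univ (fun s : ℝ => f (x + s • (y - x))) := by
    simpa [Function.comp_def, AffineMap.lineMap_apply_module', add_comm] using
      hconv.comp_affineMap (AffineMap.lineMap x y)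
  have hderiv : HasDerivAt (fun s : ℝ => f (x + s • (y - x))) ⟪g, y - x⟫ 0 :=
    HasGradientAt.hasDerivAt_comp_add_smul (by simpa using h)
  have := hline.le_slope_of_hasDerivWithinAt (Set.mem_univ 0) (Set.mem_univ 1) one_pos
    hderiv.hasDerivWithinAt
  simp only [slope_def_field, one_smul, add_sub_cancel, zero_smul, add_zero, sub_zero,
    div_one] at this
  linarith

theorem StrongConvexOn.apply_add_inner_add_sq_le {m : ℝ} (hsc : StrongConvexOn Set.univ m f)
    {x g : E} (h : HasGradientAt f g x) (y : E) :
    f x + ⟪g, y - x⟫ + m / 2 * ‖y - x‖ ^ 2 ≤ f y := by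
  have hlow := (strongConvexOn_iff_convex.1 hsc).apply_add_inner_le (h.sub_half_mul_norm_sq m) y
  have hsq : ‖y‖ ^ 2 = ‖x‖ ^ 2 + 2 * ⟪x, y - x⟫ + ‖y - x‖ ^ 2 := by
    rw [← norm_add_sq_real, add_sub_cancel]
  rw [inner_sub_left, real_inner_smul_left, hsq] at hlow
  linarith

theorem StrongConvexOn.mul_norm_sq_le_inner_sub {m : ℝ} (hsc : StrongConvexOn Set.univ m f)
    (hf : ∀ x, HasGradientAt f (f' x) x) (x y : E) :
    m * ‖x - y‖ ^ 2 ≤ ⟪f' x - f' y, x - y⟫ := by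
  have hxy := hsc.apply_add_inner_add_sq_le (hf x) y
  have hyx := hsc.apply_add_inner_add_sq_le (hf y) x
  rw [norm_sub_rev y x, ← neg_sub x y, inner_neg_right] at hxy
  rw [inner_sub_left]
  linarith

theorem StrongConvexOn.le_of_lipschitzWith [Nontrivial E] {m : ℝ} {K : NNReal}
    (hsc : StrongConvexOn Set.univ m f) (hf : ∀ x, HasGradientAt f (f' x) x)
    (hlip : LipschitzWith K f') : m ≤ K := by
  obtain ⟨x, hx⟩ := exists_ne (0 : E)
  have hpos : 0 < ‖x - 0‖ ^ 2 := by rw [sub_zero]; exact pow_pos (norm_pos_iff.2 hx) 2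
  have hmono := hsc.mul_norm_sq_le_inner_sub hf x 0
  have hcs := real_inner_le_norm (f' x - f' 0) (x - 0)
  have hK := mul_le_mul_of_nonneg_right (hlip.norm_sub_le x 0) (norm_nonneg (x - 0))
  exact le_of_mul_le_mul_right (by nlinarith) hpos

theorem apply_le_add_inner_add_sq_of_lipschitzWith {K : NNReal}
    (hf : ∀ x, HasGradientAt f (f' x) x) (hlip : LipschitzWith K f') (x y : E) :
    f y ≤ f x + ⟪f' x, y - x⟫ + K / 2 * ‖y - x‖ ^ 2 := by
  set v := y - x
  set φ : ℝ → ℝ := fun s => f (x + s • v) - s * ⟪f' x, v⟫ - K / 2 * s ^ 2 * ‖v‖ ^ 2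
  have hφ : ∀ s, HasDerivAt φ (⟪f' (x + s • v) - f' x, v⟫ - K * s * ‖v‖ ^ 2) s := by
    intro s
    refine ((((hf (x + s • v)).hasDerivAt_comp_add_smul).sub
      ((hasDerivAt_id s).mul_const ⟪f' x, v⟫)).sub
      (((hasDerivAt_pow 2 s).const_mul (K / 2 : ℝ)).mul_const (‖v‖ ^ 2))).congr_deriv ?_
    simp only [inner_sub_left, one_mul, Nat.cast_ofNat]
    ring
  have hanti : AntitoneOn φ (Set.Icc 0 1) := by
    refine antitoneOn_of_deriv_nonpos (convex_Icc 0 1)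
      (fun s _ => (hφ s).continuousAt.continuousWithinAt)
      (fun s _ => (hφ s).differentiableAt.differentiableWithinAt) fun s hs => ?_
    rw [interior_Icc] at hs
    rw [(hφ s).deriv, sub_nonpos]
    calc ⟪f' (x + s • v) - f' x, v⟫ ≤ ‖f' (x + s • v) - f' x‖ * ‖v‖ := real_inner_le_norm _ _
      _ ≤ K * ‖x + s • v - x‖ * ‖v‖ := by gcongr; exact hlip.norm_sub_le _ _
      _ = K * s * ‖v‖ ^ 2 := by
        rw [add_sub_cancel_left, norm_smul, Real.norm_of_nonneg hs.1.le]; ring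
  have := hanti (by simp) (by simp) zero_le_one
  simp only [one_smul, add_sub_cancel, one_mul, one_pow, mul_one, zero_smul, add_zero, zero_mul,
    sub_zero, ne_eq, OfNat.ofNat_ne_zero, not_false_eq_true, zero_pow, mul_zero,
    tsub_le_iff_right, φ, v] at this
  linarith

theorem ConvexOn.apply_add_inner_add_norm_sq_div_le (hconv : ConvexOn ℝ Set.univ f)
    (hf : ∀ x, HasGradientAt f (f' x) x) {c : ℝ} (hc : 0 < c)
    (hup : ∀ x y, f y ≤ f x + ⟪f' x, y - x⟫ + c / 2 * ‖y - x‖ ^ 2) (x y : E) :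
    f x + ⟪f' x, y - x⟫ + ‖f' y - f' x‖ ^ 2 / (2 * c) ≤ f y := by
  set d := f' y - f' x
  -- Bound `f` at `w` from below by convexity at `x` and from above by the quadratic bound at `y`.
  set w := y - c⁻¹ • d
  have hlow := hconv.apply_add_inner_le (hf x) w
  have hupw := hup y w
  have hw : w - x = (y - x) - c⁻¹ • d := by simp only [w]; abel
  rw [hw, inner_sub_right, real_inner_smul_right] at hlow
  rw [show w - y = -(c⁻¹ • d) by simp only [w]; abel, norm_neg, norm_smul, inner_neg_right,
    real_inner_smul_right] at hupw
  rw [Real.norm_of_nonneg (inv_nonneg.2 hc.le)] at hupw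
  have hd : c⁻¹ * ⟪f' y, d⟫ - c⁻¹ * ⟪f' x, d⟫ = c⁻¹ * ‖d‖ ^ 2 := by
    rw [← mul_sub, ← inner_sub_left, real_inner_self_eq_norm_sq]
  have key : ‖d‖ ^ 2 / (2 * c) = c⁻¹ * ‖d‖ ^ 2 - c / 2 * (c⁻¹ * ‖d‖) ^ 2 := by
    field_simp; ring
  linarith

theorem ConvexOn.norm_sq_le_mul_inner_sub (hconv : ConvexOn ℝ Set.univ f)
    (hf : ∀ x, HasGradientAt f (f' x) x) {c : ℝ} (hc : 0 < c)
    (hup : ∀ x y, f y ≤ f x + ⟪f' x, y - x⟫ + c / 2 * ‖y - x‖ ^ 2) (x y : E) :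
    ‖f' x - f' y‖ ^ 2 ≤ c * ⟪f' x - f' y, x - y⟫ := by
  have hxy := hconv.apply_add_inner_add_norm_sq_div_le hf hc hup x y
  have hyx := hconv.apply_add_inner_add_norm_sq_div_le hf hc hup y x
  rw [norm_sub_rev (f' y)] at hxy
  have hsum : ‖f' x - f' y‖ ^ 2 / c ≤ ⟪f' x - f' y, x - y⟫ := by
    rw [← neg_sub x y, inner_neg_right] at hxy
    rw [inner_sub_left]
    have : ‖f' x - f' y‖ ^ 2 / c = 2 * (‖f' x - f' y‖ ^ 2 / (2 * c)) := by field_simp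
    linarith
  rwa [div_le_iff₀' hc] at hsum

theorem StrongConvexOn.mul_mul_norm_sq_add_norm_sq_le_mul_inner_sub {μ : ℝ} {K : NNReal}
    (hsc : StrongConvexOn Set.univ μ f) (hf : ∀ x, HasGradientAt f (f' x) x)
    (hlip : LipschitzWith K f') (hμK : μ ≤ K) (x y : E) :
    μ * K * ‖x - y‖ ^ 2 + ‖f' x - f' y‖ ^ 2 ≤ (μ + K) * ⟪f' x - f' y, x - y⟫ := by
  have hmono := hsc.mul_norm_sq_le_inner_sub hf x y
  rcases hμK.eq_or_lt with rfl | hlt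
  · have hsq : ‖f' x - f' y‖ ^ 2 ≤ (K * ‖x - y‖) ^ 2 :=
      pow_le_pow_left₀ (norm_nonneg _) (hlip.norm_sub_le x y) 2
    have hK : (0 : ℝ) ≤ K := K.2
    nlinarith
  · -- `f - μ/2 ‖·‖²` is convex with a `(K - μ)`-quadratic upper bound, hence cocoercive.
    set h : E → ℝ := fun z => f z - μ / 2 * ‖z‖ ^ 2
    have hh : ∀ z, HasGradientAt h (f' z - μ • z) z := fun z => (hf z).sub_half_mul_norm_sq μ
    have hup : ∀ a b, h b ≤ h a + ⟪f' a - μ • a, b - a⟫ + (K - μ) / 2 * ‖b - a‖ ^ 2 := by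
      intro a b
      have hfup := apply_le_add_inner_add_sq_of_lipschitzWith hf hlip a b
      have hsq : ‖b‖ ^ 2 = ‖a‖ ^ 2 + 2 * ⟪a, b - a⟫ + ‖b - a‖ ^ 2 := by
        rw [← norm_add_sq_real, add_sub_cancel]
      simp only [h, inner_sub_left, real_inner_smul_left, hsq]
      linarith
    have hco := (strongConvexOn_iff_convex.1 hsc).norm_sq_le_mul_inner_sub hh (sub_pos.2 hlt)
      hup x y
    have hnorm : ‖f' x - μ • x - (f' y - μ • y)‖ ^ 2
        = ‖f' x - f' y‖ ^ 2 - 2 * μ * ⟪f' x - f' y, x - y⟫ + μ ^ 2 * ‖x - y‖ ^ 2 := by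
      rw [show f' x - μ • x - (f' y - μ • y) = (f' x - f' y) - μ • (x - y) by module,
        norm_sub_sq_real, real_inner_smul_right, norm_smul, mul_pow, Real.norm_eq_abs, sq_abs]
      ring
    have hinner : ⟪f' x - μ • x - (f' y - μ • y), x - y⟫
        = ⟪f' x - f' y, x - y⟫ - μ * ‖x - y‖ ^ 2 := by
      rw [show f' x - μ • x - (f' y - μ • y) = (f' x - f' y) - μ • (x - y) by module,
        inner_sub_left, real_inner_smul_left, real_inner_self_eq_norm_sq]
    rw [hnorm, hinner] at hco
    linarith

theorem StrongConvexOn.norm_sub_smul_sub_sq_le {μ α : ℝ} {K : NNReal}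
    (hsc : StrongConvexOn Set.univ μ f) (hf : ∀ x, HasGradientAt f (f' x) x)
    (hlip : LipschitzWith K f') (hμ : 0 < μ) (hμK : μ ≤ K) (hα : 0 ≤ α)
    (hαK : α * (μ + K) ≤ 2) (x y : E) :
    ‖(x - α • f' x) - (y - α • f' y)‖ ^ 2 ≤ (1 - 2 * α * (μ * K / (μ + K))) * ‖x - y‖ ^ 2 := by
  have hpos : 0 < μ + K := by positivity
  have hint := hsc.mul_mul_norm_sq_add_norm_sq_le_mul_inner_sub hf hlip hμK x y
  rw [show x - α • f' x - (y - α • f' y) = (x - y) - α • (f' x - f' y) by module,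
    norm_sub_sq_real, norm_smul, real_inner_smul_right, mul_pow, Real.norm_of_nonneg hα,
    real_inner_comm]
  refine le_of_mul_le_mul_left ?_ hpos
  rw [show (μ + K) * ((1 - 2 * α * (μ * K / (μ + K))) * ‖x - y‖ ^ 2)
      = (μ + K - 2 * α * μ * K) * ‖x - y‖ ^ 2 by field_simp]
  nlinarith [mul_le_mul_of_nonneg_left hint hα,
    mul_le_mul_of_nonneg_right hαK (mul_nonneg hα (sq_nonneg ‖f' x - f' y‖))]

theorem StrongConvexOn.norm_sub_smul_sub_le [Nontrivial E] {μ α ν : ℝ} {K : NNReal}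
    (hsc : StrongConvexOn Set.univ μ f) (hf : ∀ x, HasGradientAt f (f' x) x)
    (hlip : LipschitzWith K f') (hμ : 0 < μ) (hα : 0 ≤ α) (hαK : α * K ≤ 1)
    (hν : ν ≤ 2 * α * (μ * K / (μ + K))) {u : E} (hu : f' u = 0) (x : E) :
    ‖x - α • f' x - u‖ ≤ (1 - ν / 2) * ‖x - u‖ := by
  have hμK := hsc.le_of_lipschitzWith hf hlip
  have hθ : μ * K / (μ + K) ≤ K / 2 := by
    rw [div_le_div_iff₀ (by linarith) two_pos]; nlinarith
  have hsq := hsc.norm_sub_smul_sub_sq_le hf hlip hμ hμK hα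
    (by nlinarith [mul_le_mul_of_nonneg_left hμK hα]) x u
  rw [hu, smul_zero, sub_zero] at hsq
  have hν2 : ν ≤ 2 := by nlinarith
  refine le_of_pow_le_pow_left₀ two_ne_zero (mul_nonneg (by linarith) (norm_nonneg _)) ?_
  calc ‖x - α • f' x - u‖ ^ 2 ≤ (1 - 2 * α * (μ * K / (μ + K))) * ‖x - u‖ ^ 2 := hsq
    _ ≤ (1 - ν / 2) ^ 2 * ‖x - u‖ ^ 2 := by gcongr; nlinarith [sq_nonneg ν]
    _ = ((1 - ν / 2) * ‖x - u‖) ^ 2 := by ring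

end GradientInequalities

theorem le_add_div_of_le_mul_add {a : ℕ → ℝ} {ρ b : ℝ} (hρ : ρ < 1) (ha : ∀ k, 0 ≤ a k)
    (hb : 0 ≤ b) (h : ∀ k, a (k + 1) ≤ ρ * (a k + b)) (k : ℕ) : a k ≤ a 0 + b / (1 - ρ) := by
  have hbρ : b / (1 - ρ) * (1 - ρ) = b := div_mul_cancel₀ _ (sub_ne_zero.2 hρ.ne')
  have hR : 0 ≤ b / (1 - ρ) := div_nonneg hb (sub_nonneg.2 hρ.le)
  induction k with
  | zero => linarith
  | succ k ih =>
    rcases le_or_gt ρ 0 with hρ0 | hρ0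
    · nlinarith [ha k, ha 0, h k]
    · nlinarith [h k, mul_le_mul_of_nonneg_left ih hρ0.le, ha 0]

theorem PiLp.norm_le_mul_norm_of_forall {ι : Type*} [Fintype ι] {β : ι → Type*}
    [∀ i, SeminormedAddCommGroup (β i)] {c : ℝ} (hc : 0 ≤ c) {v w : PiLp 2 β}
    (h : ∀ i, ‖v i‖ ≤ c * ‖w i‖) : ‖v‖ ≤ c * ‖w‖ := by
  refine le_of_pow_le_pow_left₀ two_ne_zero (by positivity) ?_
  rw [PiLp.norm_sq_eq_of_L2, mul_pow, PiLp.norm_sq_eq_of_L2, Finset.mul_sum]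
  gcongr with i
  rw [← mul_pow]
  exact pow_le_pow_left₀ (norm_nonneg _) (h i) 2

theorem norm_inv_smul_sum_le {E : Type*} [SeminormedAddCommGroup E] [NormedSpace ℝ E] {n : ℕ}
    (hn : 0 < n) {w : Fin n → E} {B : ℝ} (h : ∀ i, ‖w i‖ ≤ B) :
    ‖(n : ℝ)⁻¹ • ∑ i, w i‖ ≤ B := by
  rw [norm_smul, norm_inv, Real.norm_natCast, inv_mul_le_iff₀ (by exact_mod_cast hn)]
  simpa using norm_sum_le_of_le Finset.univ fun i _ => h i

theorem two_mul_mul_mem_Ioo_of_isLeast {n : ℕ} {μ K : Fin n → ℝ} {L α γ : ℝ}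
    (hμ : ∀ i, 0 < μ i) (hK : ∀ i, 0 < K i) (hKL : ∀ i, K i ≤ L) (hα : 0 < α) (hαL : α * L < 1)
    (hγ : IsLeast (Set.range fun i => μ i * K i / (μ i + K i)) γ) :
    2 * α * γ ∈ Set.Ioo 0 2 := by
  obtain ⟨⟨i, rfl⟩, -⟩ := hγ
  have hμi := hμ i
  have hKi := hK i
  have hθ : μ i * K i / (μ i + K i) ≤ L := by
    rw [div_le_iff₀ (by positivity)]; nlinarith [hKL i]
  exact ⟨by positivity, by nlinarith⟩

section HermitianSpectral

variable {ι : Type*} [Fintype ι] [DecidableEq ι] {A : Matrix ι ι ℝ}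

theorem Matrix.IsHermitian.pow_mulVec_eigenvectorBasis (hA : A.IsHermitian) (t : ℕ) (m : ι) :
    A ^ t *ᵥ ⇑(hA.eigenvectorBasis m) = hA.eigenvalues m ^ t • ⇑(hA.eigenvectorBasis m) := by
  induction t with
  | zero => simp
  | succ t ih =>
    rw [pow_succ', ← mulVec_mulVec, ih, mulVec_smul, hA.mulVec_eigenvectorBasis, smul_smul,
      pow_succ]

theorem Matrix.IsHermitian.inner_eigenvectorBasis_toEuclideanLin_pow (hA : A.IsHermitian)
    (t : ℕ) (m : ι) (u : EuclideanSpace ℝ ι) :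
    ⟪hA.eigenvectorBasis m, toEuclideanLin (A ^ t) u⟫
      = hA.eigenvalues m ^ t * ⟪hA.eigenvectorBasis m, u⟫ := by
  rw [← isSymmetric_toEuclideanLin_iff.2 (hA.pow t), toLpLin_apply,
    hA.pow_mulVec_eigenvectorBasis, WithLp.toLp_smul, WithLp.toLp_ofLp, real_inner_smul_left]

theorem Matrix.IsHermitian.norm_toEuclideanLin_pow_le (hA : A.IsHermitian) (t : ℕ) {r : ℝ}
    (hr : 0 ≤ r) {u : EuclideanSpace ℝ ι}
    (hu : ∀ m, ⟪hA.eigenvectorBasis m, u⟫ ≠ 0 → |hA.eigenvalues m| ≤ r) :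
    ‖toEuclideanLin (A ^ t) u‖ ≤ r ^ t * ‖u‖ := by
  have hsq : ‖toEuclideanLin (A ^ t) u‖ ^ 2 ≤ (r ^ t * ‖u‖) ^ 2 := by
    rw [← hA.eigenvectorBasis.sum_sq_inner_right, mul_pow,
      ← hA.eigenvectorBasis.sum_sq_inner_right u, Finset.mul_sum]
    refine Finset.sum_le_sum fun m _ => ?_
    rw [hA.inner_eigenvectorBasis_toEuclideanLin_pow, mul_pow, ← sq_abs (_ ^ t), abs_pow]
    by_cases hm : ⟪hA.eigenvectorBasis m, u⟫ = 0
    · simp [hm]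
    · gcongr
      exact hu m hm
  exact le_of_pow_le_pow_left₀ two_ne_zero (by positivity) hsq

theorem Matrix.IsHermitian.inner_eigenvectorBasis_eq_zero (hA : A.IsHermitian) {μ₀ : ℝ}
    {w u : EuclideanSpace ℝ ι} (hw : w ≠ 0) (hAw : toEuclideanLin A w = μ₀ • w) {m : ι}
    (hsimple : ∀ m', hA.eigenvalues m' = μ₀ → m' = m) (hwu : ⟪w, u⟫ = 0) :
    ⟪hA.eigenvectorBasis m, u⟫ = 0 := by
  set e := hA.eigenvectorBasis
  have hperp : ∀ m', m' ≠ m → ⟪e m', w⟫ = 0 := by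
    intro m' hm'
    have hsym := isSymmetric_toEuclideanLin_iff.2 hA (e m') w
    rw [hAw, toLpLin_apply, hA.mulVec_eigenvectorBasis, WithLp.toLp_smul, WithLp.toLp_ofLp,
      real_inner_smul_left, real_inner_smul_right] at hsym
    have hne : hA.eigenvalues m' - μ₀ ≠ 0 := sub_ne_zero.2 fun h => hm' (hsimple m' h)
    exact (mul_eq_zero.1 (by linarith : (hA.eigenvalues m' - μ₀) * ⟪e m', w⟫ = 0)).resolve_left hne
  have hw' : w = ⟪e m, w⟫ • e m := by
    conv_lhs => rw [← e.sum_repr' w]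
    exact Finset.sum_eq_single m (fun m' _ hm' => by rw [hperp m' hm', zero_smul]) (by simp)
  have hc : ⟪e m, w⟫ ≠ 0 := fun h => hw (by rw [hw', h, zero_smul])
  rw [hw', real_inner_smul_left] at hwu
  exact (mul_eq_zero.1 hwu).resolve_left hc

end HermitianSpectral

section Consensus

variable {n p : ℕ}

def column (v : CVec n p) (a : Fin p) : EuclideanSpace ℝ (Fin n) :=
  WithLp.toLp 2 (fun i => v i a)

def consensus (c : Vec p) : CVec n p := WithLp.toLp 2 (fun _ => c)

def average (v : CVec n p) : Vec p := (n : ℝ)⁻¹ • ∑ i, v i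

theorem norm_sq_eq_sum_norm_sq_column (v : CVec n p) : ‖v‖ ^ 2 = ∑ a, ‖column v a‖ ^ 2 := by
  simp only [PiLp.norm_sq_eq_of_L2]
  exact Finset.sum_comm

theorem column_kron (M : Matrix (Fin n) (Fin n) ℝ) (v : CVec n p) (a : Fin p) :
    column (kron M v) a = toEuclideanLin M (column v a) := by
  ext i
  simp [column, kron, toLpLin_apply, mulVec, dotProduct]

theorem norm_kron_le (M : Matrix (Fin n) (Fin n) ℝ) {r : ℝ} (hr : 0 ≤ r) (v : CVec n p)
    (h : ∀ a, ‖toEuclideanLin M (column v a)‖ ≤ r * ‖column v a‖) : ‖kron M v‖ ≤ r * ‖v‖ := by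
  refine le_of_pow_le_pow_left₀ two_ne_zero (by positivity) ?_
  rw [norm_sq_eq_sum_norm_sq_column, mul_pow, norm_sq_eq_sum_norm_sq_column, Finset.mul_sum]
  gcongr with a
  rw [column_kron, ← mul_pow]
  exact pow_le_pow_left₀ (norm_nonneg _) (h a) 2

theorem kron_sub (M : Matrix (Fin n) (Fin n) ℝ) (u v : CVec n p) :
    kron M (u - v) = kron M u - kron M v := by
  ext i : 1
  simp [kron, smul_sub]

theorem kron_consensus {M : Matrix (Fin n) (Fin n) ℝ} (hrow : ∀ i, ∑ j, M i j = 1) (c : Vec p) :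
    kron M (consensus c) = consensus c := by
  ext i : 1
  simp [kron, consensus, ← Finset.sum_smul, hrow i]

theorem average_kron {M : Matrix (Fin n) (Fin n) ℝ} (hcol : ∀ j, ∑ i, M i j = 1) (v : CVec n p) :
    average (kron M v) = average v := by
  unfold average kron
  congr 1
  rw [Finset.sum_comm]
  simp [← Finset.sum_smul, hcol]

theorem consensus_average_sub (u v : CVec n p) :
    (consensus (average (u - v)) : CVec n p)
      = consensus (average u) - consensus (average v) := by
  ext i : 1
  simp [consensus, average, Finset.sum_sub_distrib, smul_sub]

theorem sum_sub_consensus_average (v : CVec n p) :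
    ∑ i, (v - (consensus (average v) : CVec n p)) i = 0 := by
  rcases eq_or_ne n 0 with rfl | hn
  · simp
  · simp only [consensus, average, WithLp.ofLp_sub, Pi.sub_apply, Finset.sum_sub_distrib,
      Finset.sum_const, Finset.card_univ, Fintype.card_fin]
    rw [← Nat.cast_smul_eq_nsmul ℝ, smul_smul, mul_inv_cancel₀ (Nat.cast_ne_zero.2 hn), one_smul,
      sub_self]

theorem norm_sub_consensus_average_le (v : CVec n p) :
    ‖v - (consensus (average v) : CVec n p)‖ ≤ ‖v‖ := by
  set c : CVec n p := consensus (average v)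
  have horth : ⟪v - c, c⟫ = 0 := by
    rw [PiLp.inner_apply]
    change ∑ i, ⟪(v - c) i, average v⟫ = 0
    rw [← sum_inner, sum_sub_consensus_average, inner_zero_left]
  have hpyth := norm_add_sq_eq_norm_sq_add_norm_sq_real horth
  rw [sub_add_cancel] at hpyth
  exact (mul_self_le_mul_self_iff (norm_nonneg _) (norm_nonneg _)).2
    (by rw [hpyth]; exact le_add_of_nonneg_right (mul_self_nonneg _))

end Consensus

section Mixing

variable {n p : ℕ} {W : Matrix (Fin n) (Fin n) ℝ}

theorem norm_kron_pow_le (hW : W.IsHermitian) (heig : ∀ m, |hW.eigenvalues m| ≤ 1) (t : ℕ)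
    (v : CVec n p) : ‖kron (W ^ t) v‖ ≤ ‖v‖ := by
  simpa using norm_kron_le (W ^ t) zero_le_one v fun a => by
    simpa using hW.norm_toEuclideanLin_pow_le t zero_le_one fun m _ => heig m

theorem norm_kron_pow_le_of_sum_eq_zero (hW : W.IsHermitian) (hrow : W *ᵥ 1 = 1)
    (hsimple : ∃! m, hW.eigenvalues m = 1) {β : ℝ} (hβ0 : 0 ≤ β)
    (hβ : ∀ m, hW.eigenvalues m ≠ 1 → |hW.eigenvalues m| ≤ β) (t : ℕ) {v : CVec n p}
    (hv : ∑ i, v i = 0) : ‖kron (W ^ t) v‖ ≤ β ^ t * ‖v‖ := by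
  obtain ⟨m₀, -, hm₀⟩ := hsimple
  set ones : EuclideanSpace ℝ (Fin n) := WithLp.toLp 2 1
  have hones : toEuclideanLin W ones = (1 : ℝ) • ones := by simp [ones, toLpLin_apply, hrow]
  have hones0 : ones ≠ 0 := fun h => by
    simpa [ones] using congr_fun (congr_arg WithLp.ofLp h) m₀
  refine norm_kron_le _ (by positivity) v fun a =>
    hW.norm_toEuclideanLin_pow_le t hβ0 fun m hm => hβ m fun h1 => hm ?_
  obtain rfl := hm₀ m h1
  refine hW.inner_eigenvectorBasis_eq_zero hones0 hones hm₀ ?_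
  have := congr_arg (fun w : Vec p => w a) hv
  simpa [ones, column, PiLp.inner_apply] using this

theorem norm_kron_pow_sub_consensus_average_le (hW : W.IsHermitian)
    (hds : W ∈ doublyStochastic ℝ (Fin n)) (hsimple : ∃! m, hW.eigenvalues m = 1) {β : ℝ}
    (hβ0 : 0 ≤ β) (hβ : ∀ m, hW.eigenvalues m ≠ 1 → |hW.eigenvalues m| ≤ β) (t : ℕ)
    (y u : CVec n p) :
    ‖kron (W ^ t) y - consensus (average (kron (W ^ t) y))‖ ≤ β ^ t * (‖y - u‖ + ‖u‖) := by
  have hWt := pow_mem hds t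
  rw [average_kron (sum_col_of_mem_doublyStochastic hWt),
    ← kron_consensus (sum_row_of_mem_doublyStochastic hWt), ← kron_sub]
  have hsplit : y - consensus (average y) = (y - u - consensus (average (y - u)))
      + (u - consensus (average u)) := by
    rw [consensus_average_sub]; abel
  calc _ ≤ β ^ t * ‖y - consensus (average y)‖ :=
        norm_kron_pow_le_of_sum_eq_zero hW (mulVec_one_of_mem_doublyStochastic hds) hsimple hβ0
          hβ t (sum_sub_consensus_average y)
    _ ≤ β ^ t * (‖y - u‖ + ‖u‖) := by
        rw [hsplit]
        gcongr
        exact (norm_add_le _ _).trans (add_le_add (norm_sub_consensus_average_le _)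
          (norm_sub_consensus_average_le _))

end Mixing

section NearDGD

variable {n p : ℕ}

theorem LipschitzWith.norm_sub_le_of_norm_sub_consensus_le {F : Vec p → Vec p} {K : NNReal}
    (hF : LipschitzWith K F) {x : CVec n p} {c : Vec p} {B : ℝ} (h : ‖x - consensus c‖ ≤ B)
    (i : Fin n) : ‖F (x i) - F c‖ ≤ B * K :=
  calc ‖F (x i) - F c‖ ≤ K * ‖x i - c‖ := hF.norm_sub_le _ _
    _ ≤ K * B := by gcongr; exact (PiLp.norm_apply_le (x - consensus c) i).trans h
    _ = B * K := mul_comm _ _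

theorem norm_kron_sub_le {M : Matrix (Fin n) (Fin n) ℝ} (hM : ∀ v : CVec n p, ‖kron M v‖ ≤ ‖v‖)
    (y u : CVec n p) : ‖kron M y - u‖ ≤ ‖y - u‖ + 2 * ‖u‖ := by
  rw [show kron M y - u = kron M (y - u) + (kron M u - u) by rw [kron_sub]; abel]
  linarith [norm_add_le (kron M (y - u)) (kron M u - u), norm_sub_le (kron M u) u, hM (y - u),
    hM u]

theorem near_dgd_norm_sub_le {M : Matrix (Fin n) (Fin n) ℝ}
    (hM : ∀ v : CVec n p, ‖kron M v‖ ≤ ‖v‖) {f : Fin n → Vec p → ℝ} {α ν : ℝ} (hν0 : 0 < ν)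
    (hν2 : ν ≤ 2) {u : CVec n p}
    (hstep : ∀ i z, ‖z - α • gradient (f i) z - u i‖ ≤ (1 - ν / 2) * ‖z - u i‖)
    {x y : ℕ → CVec n p} (hx : ∀ k, x k = kron M (y k))
    (hy : ∀ k, y (k + 1) = x k - α • gradConcat f (x k)) (k : ℕ) :
    ‖y k - u‖ ≤ ‖y 0 - u‖ + 4 / ν * ‖u‖ := by
  have hrec : ∀ k, ‖y (k + 1) - u‖ ≤ (1 - ν / 2) * (‖y k - u‖ + 2 * ‖u‖) := fun k =>
    calc ‖y (k + 1) - u‖ ≤ (1 - ν / 2) * ‖x k - u‖ :=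
          PiLp.norm_le_mul_norm_of_forall (by linarith) fun i => by
            rw [hy k]; exact hstep i (x k i)
      _ ≤ (1 - ν / 2) * (‖y k - u‖ + 2 * ‖u‖) := by
          gcongr
          · linarith
          · rw [hx k]; exact norm_kron_sub_le hM _ _
  convert le_add_div_of_le_mul_add (a := fun k => ‖y k - u‖) (b := 2 * ‖u‖)
    (by linarith : 1 - ν / 2 < 1) (fun k => norm_nonneg _) (by positivity) hrec k using 2
  rw [sub_sub_cancel]
  field_simp
  ring

end NearDGD

theorem near_dgdt_bounded_gradient_deviation_general
    (n p t : ℕ) (hn : 1 ≤ n) (hp : 1 ≤ p)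
    -- local objective functions: μᵢ-strongly convex, differentiable,
    -- with Lᵢ-Lipschitz gradients
    (f : Fin n → Vec p → ℝ) (μ Lc : Fin n → ℝ) (L : ℝ)
    (hμpos : ∀ i, 0 < μ i) (hLpos : ∀ i, 0 < Lc i)
    (hsc : ∀ i, StrongConvexOn Set.univ (μ i) (f i))
    (hdiff : ∀ i, Differentiable ℝ (f i))
    (hLip : ∀ i, LipschitzWith (Real.toNNReal (Lc i)) (fun z => gradient (f i) z))
    (hLmax : IsGreatest (Set.range Lc) L)
    -- u*: the concatenation of the unique minimizers uᵢ* of the fᵢ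
    (ustar : CVec n p) (hustar : ∀ i, ∀ z, f i (ustar i) ≤ f i z)
    -- W is symmetric, doubly stochastic, with eigenvalues in (−1, 1]
    (W : Matrix (Fin n) (Fin n) ℝ) (hWsymm : W.IsHermitian)
    (hrow : ∀ i, ∑ j, W i j = 1) (hcol : ∀ j, ∑ i, W i j = 1)
    (hWnn : ∀ i j, 0 ≤ W i j)
    (heig : ∀ i, hWsymm.eigenvalues i ∈ Set.Ioc (-1 : ℝ) 1)
    (hone : ∃! i, hWsymm.eigenvalues i = 1)
    -- β ∈ (0,1): the second largest magnitude of the eigenvalues of W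
    (β : ℝ)
    (hβ : IsGreatest {r : ℝ | ∃ i, hWsymm.eigenvalues i ≠ 1 ∧ r = |hWsymm.eigenvalues i|} β)
    -- stepsize 0 < α < 1/L
    (α : ℝ) (hα : 0 < α) (hαlt : α < 1 / L)
    -- NEAR-DGDᵗ iterates: x_k = Zᵗ y_k, y_{k+1} = x_k − α∇f(x_k), with y₀ = (s₀;…;s₀)
    (x y : ℕ → CVec n p)
    (hxdef : ∀ k, x k = kron (W ^ t) (y k))
    (hydef : ∀ k, y (k + 1) = x k - α • gradConcat f (x k))
    -- γ = minᵢ μᵢLᵢ/(μᵢ + Lᵢ), ν = 2αγ, and the bound D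
    (γ ν D : ℝ)
    (hγ : IsLeast (Set.range fun i => μ i * Lc i / (μ i + Lc i)) γ)
    (hν : ν = 2 * α * γ)
    (hD : D = ‖y 0 - ustar‖ + ((ν + 4) / ν) * ‖ustar‖)
    -- the mean iterate, the averaged gradients g and ḡ
    (xbar : ℕ → Vec p) (hxbar : ∀ k, xbar k = (n : ℝ)⁻¹ • ∑ i, x k i)
    (g gbar : ℕ → Vec p)
    (hg : ∀ k, g k = (n : ℝ)⁻¹ • ∑ i, gradient (f i) (x k i))
    (hgbar : ∀ k, gbar k = (n : ℝ)⁻¹ • ∑ i, gradient (f i) (xbar k)) :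
    ∀ k, 1 ≤ k →
      (∀ i, ‖gradient (f i) (x k i) - gradient (f i) (xbar k)‖ ≤ β ^ t * D * Lc i) ∧
      ‖g k - gbar k‖ ≤ β ^ t * D * L := by
  intro k _
  have : Nonempty (Fin p) := ⟨⟨0, hp⟩⟩
  have hLc : ∀ i, Lc i ≤ L := fun i => hLmax.2 ⟨i, rfl⟩
  have hLc' : ∀ i, ((Lc i).toNNReal : ℝ) = Lc i := fun i => Real.coe_toNNReal _ (hLpos i).le
  have hαL : α * L < 1 := by
    obtain ⟨i, rfl⟩ := hLmax.1
    rwa [lt_div_iff₀ (hLpos i)] at hαlt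
  obtain ⟨hν0, hν2⟩ := hν ▸ two_mul_mul_mem_Ioo_of_isLeast hμpos hLpos hLc hα hαL hγ
  have hstep : ∀ i z, ‖z - α • gradient (f i) z - ustar i‖ ≤ (1 - ν / 2) * ‖z - ustar i‖ :=
    fun i z => (hsc i).norm_sub_smul_sub_le (fun z => (hdiff i z).hasGradientAt) (hLip i)
      (hμpos i) hα.le (by rw [hLc' i]; nlinarith [hLc i])
      (by rw [hLc' i, hν]; gcongr; exact hγ.2 ⟨i, rfl⟩)
      (IsLocalMin.hasGradientAt_eq_zero (.of_forall (hustar i)) (hdiff i _).hasGradientAt) z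
  have hiter := near_dgd_norm_sub_le (norm_kron_pow_le hWsymm
    (fun m => abs_le.2 ⟨(heig m).1.le, (heig m).2⟩) t) hν0 hν2.le hstep hxdef hydef k
  have hβ0 : 0 ≤ β := by obtain ⟨m, -, rfl⟩ := hβ.1; exact abs_nonneg _
  have hdev : ‖x k - consensus (xbar k)‖ ≤ β ^ t * D := by
    rw [hxbar k, hxdef k]
    refine (norm_kron_pow_sub_consensus_average_le hWsymm
      (mem_doublyStochastic_iff_sum.2 ⟨hWnn, hrow, hcol⟩) hone hβ0
      (fun m hm => hβ.2 ⟨m, hm, rfl⟩) t (y k) ustar).trans ?_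
    rw [hD, add_div, div_self hν0.ne', add_mul, one_mul]
    exact mul_le_mul_of_nonneg_left (by linarith) (by positivity)
  have hagent : ∀ i, ‖gradient (f i) (x k i) - gradient (f i) (xbar k)‖ ≤ β ^ t * D * Lc i :=
    fun i => by simpa [hLc' i] using (hLip i).norm_sub_le_of_norm_sub_consensus_le hdev i
  refine ⟨hagent, ?_⟩
  rw [hg k, hgbar k, ← smul_sub, ← Finset.sum_sub_distrib]
  exact norm_inv_smul_sum_le hn fun i =>
    (hagent i).trans (mul_le_mul_of_nonneg_left (hLc i) ((norm_nonneg _).trans hdev))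

/-- Bounded gradient deviation for NEAR-DGDᵗ: if `0 < α < 1/L` and
`y_{i,0} = s₀` for all `i`, then for all `k ≥ 1` and all `i`:
`‖∇fᵢ(x_{i,k}) − ∇fᵢ(x̄_k)‖ ≤ βᵗDLᵢ` and `‖g_k − ḡ_k‖ ≤ βᵗDL`. -/
theorem near_dgdt_bounded_gradient_deviation
    (n p t : ℕ) (hn : 1 ≤ n) (hp : 1 ≤ p) (ht : 1 ≤ t)
    -- local objective functions: μᵢ-strongly convex, differentiable,
    -- with Lᵢ-Lipschitz gradients
    (f : Fin n → Vec p → ℝ) (μ Lc : Fin n → ℝ) (L : ℝ)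
    (hμpos : ∀ i, 0 < μ i) (hLpos : ∀ i, 0 < Lc i)
    (hsc : ∀ i, StrongConvexOn Set.univ (μ i) (f i))
    (hdiff : ∀ i, Differentiable ℝ (f i))
    (hLip : ∀ i, LipschitzWith (Real.toNNReal (Lc i)) (fun z => gradient (f i) z))
    (hLmax : IsGreatest (Set.range Lc) L)
    -- u*: the concatenation of the unique minimizers uᵢ* of the fᵢ
    (ustar : CVec n p) (hustar : ∀ i, ∀ z, f i (ustar i) ≤ f i z)
    -- W is symmetric, doubly stochastic, with eigenvalues in (−1, 1]
    (W : Matrix (Fin n) (Fin n) ℝ) (hWsymm : W.IsHermitian)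
    (hrow : ∀ i, ∑ j, W i j = 1) (hcol : ∀ j, ∑ i, W i j = 1)
    (hWnn : ∀ i j, 0 ≤ W i j)
    (heig : ∀ i, hWsymm.eigenvalues i ∈ Set.Ioc (-1 : ℝ) 1)
    (hone : ∃! i, hWsymm.eigenvalues i = 1)
    -- β ∈ (0,1): the second largest magnitude of the eigenvalues of W
    (β : ℝ) (hβmem : β ∈ Set.Ioo (0 : ℝ) 1)
    (hβ : IsGreatest {r : ℝ | ∃ i, hWsymm.eigenvalues i ≠ 1 ∧ r = |hWsymm.eigenvalues i|} β)
    -- stepsize 0 < α < 1/L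
    (α : ℝ) (hα : 0 < α) (hαlt : α < 1 / L)
    -- NEAR-DGDᵗ iterates: x_k = Zᵗ y_k, y_{k+1} = x_k − α∇f(x_k), with y₀ = (s₀;…;s₀)
    (x y : ℕ → CVec n p)
    (hxdef : ∀ k, x k = kron (W ^ t) (y k))
    (hydef : ∀ k, y (k + 1) = x k - α • gradConcat f (x k))
    (s0 : Vec p) (hy0 : ∀ i, y 0 i = s0)
    -- γ = minᵢ μᵢLᵢ/(μᵢ + Lᵢ), ν = 2αγ, and the bound D
    (γ ν D : ℝ)
    (hγ : IsLeast (Set.range fun i => μ i * Lc i / (μ i + Lc i)) γ)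
    (hν : ν = 2 * α * γ)
    (hD : D = ‖y 0 - ustar‖ + ((ν + 4) / ν) * ‖ustar‖)
    -- the mean iterate, the averaged gradients g and ḡ
    (xbar : ℕ → Vec p) (hxbar : ∀ k, xbar k = (n : ℝ)⁻¹ • ∑ i, x k i)
    (g gbar : ℕ → Vec p)
    (hg : ∀ k, g k = (n : ℝ)⁻¹ • ∑ i, gradient (f i) (x k i))
    (hgbar : ∀ k, gbar k = (n : ℝ)⁻¹ • ∑ i, gradient (f i) (xbar k)) :
    ∀ k, 1 ≤ k →
      (∀ i, ‖gradient (f i) (x k i) - gradient (f i) (xbar k)‖ ≤ β ^ t * D * Lc i) ∧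
      ‖g k - gbar k‖ ≤ β ^ t * D * L :=
  near_dgdt_bounded_gradient_deviation_general n p t hn hp f μ Lc L hμpos hLpos hsc hdiff hLip hLmax
    ustar hustar W hWsymm hrow hcol hWnn heig hone β hβ α hα hαlt x y hxdef hydef γ ν D hγ hν hD
    xbar hxbar g gbar hg hgbar
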